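/- arXiv:1204.5125 — 3 statements merged into one kernel-verified Lean document; each statement's English description precedes it below -/
import Mathlib

section
/- Let e_1, ..., e_n with n = d(d+1)/2 be the edge vectors of a nondegenerate d-dimensional simplex in R^d. Then the symmetric rank-one matrices e_i e_i^T, i = 1, ..., n, form a basis of the real vector space of symmetric d×d matrices. -/
/-!
Let `g k` be the gradient of the `k`-th barycentric coordinate of the simplex, so that
`g k ⬝ᵥ (x a - x b) = δ_ka - δ_kb`. For `i < j` and `a < b` this gives
`-(g i)ᵀ (e_ab e_abᵀ) (g j) = δ_(i,j),(a,b)`: the functionals `M ↦ -(g i)ᵀ M (g j)` are dual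
to the matrices `e_ab e_abᵀ`, which are therefore linearly independent. They are symmetric,
and a symmetric matrix is determined by its `d(d+1)/2` entries on and above the diagonal, as
many as there are edges; so they span the symmetric matrices.
-/

open Matrix Module

theorem AffineIndependent.exists_dotProduct_sub_eq_ite {ι n K : Type*} [Field K] [Fintype n]
    [DecidableEq n] [DecidableEq ι] {x : ι → n → K} (hx : AffineIndependent K x)
    (hspan : affineSpan K (Set.range x) = ⊤) :
    ∃ g : ι → n → K, ∀ k a b,
      g k ⬝ᵥ (x a - x b) = (if k = a then 1 else 0) - (if k = b then 1 else 0) := by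
  let B : AffineBasis ι K (n → K) := ⟨x, hx, hspan⟩
  refine ⟨fun k => (dotProductEquiv K n).symm (B.coord k).linear, fun k a b => ?_⟩
  rw [← dotProductEquiv_apply_apply, LinearEquiv.apply_symm_apply, ← vsub_eq_sub,
    AffineMap.linearMap_vsub]
  exact congr($(B.coord_apply k a) - $(B.coord_apply k b))

theorem neg_mul_sub_ite_eq_ite {ι R : Type*} [LinearOrder ι] [CommRing R] {a b i j : ι}
    (hab : a < b) (hij : i < j) :
    -(((if i = a then 1 else 0) - (if i = b then 1 else 0)) *
        ((if j = a then 1 else 0) - (if j = b then 1 else 0)) : R) =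
      if i = a ∧ j = b then 1 else 0 := by
  split_ifs <;> first | (exfalso; order) | simp_all

theorem linearIndependent_vecMulVec_sub_self {ι n R : Type*} [LinearOrder ι] [Fintype ι]
    [Fintype n] [CommRing R] (x g : ι → n → R)
    (hg : ∀ k a b, g k ⬝ᵥ (x a - x b) = (if k = a then 1 else 0) - (if k = b then 1 else 0)) :
    LinearIndependent R fun p : {p : ι × ι // p.1 < p.2} =>
      vecMulVec (x p.1.1 - x p.1.2) (x p.1.1 - x p.1.2) := by
  set E : {p : ι × ι // p.1 < p.2} → Matrix n n R :=
    fun p => vecMulVec (x p.1.1 - x p.1.2) (x p.1.1 - x p.1.2)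
  rw [Fintype.linearIndependent_iff]
  intro c hc q
  have hdual : ∀ p, -(g q.1.1 ⬝ᵥ E p *ᵥ g q.1.2) = if q = p then 1 else 0 := by
    intro p
    rw [vecMulVec_mulVec, op_smul_eq_smul, dotProduct_smul, smul_eq_mul,
      dotProduct_comm _ (g _), hg, hg, mul_comm, neg_mul_sub_ite_eq_ite p.2 q.2]
    simp [Subtype.ext_iff, Prod.ext_iff]
  calc c q = ∑ p, c p * if q = p then 1 else 0 := by simp
    _ = -(g q.1.1 ⬝ᵥ (∑ p, c p • E p) *ᵥ g q.1.2) := by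
      simp only [← hdual, sum_mulVec, dotProduct_sum, smul_mulVec, dotProduct_smul, smul_eq_mul,
        Finset.sum_neg_distrib, mul_neg]
    _ = 0 := by rw [hc, zero_mulVec, dotProduct_zero, neg_zero]

theorem LinearIndependent.span_eq_of_mem_of_finrank_le {ι K V : Type*} [Fintype ι] [Field K]
    [AddCommGroup V] [Module K V] {f : ι → V} (hf : LinearIndependent K f) {W : Submodule K V}
    [FiniteDimensional K W] (hmem : ∀ i, f i ∈ W) (hcard : finrank K W ≤ Fintype.card ι) :
    Submodule.span K (Set.range f) = W :=
  Submodule.eq_of_le_of_finrank_le (Submodule.span_le.2 <| Set.range_subset_iff.2 hmem)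
    (hcard.trans (finrank_span_eq_card hf).ge)

namespace Matrix

def symmetricSubmodule (n R : Type*) [CommSemiring R] : Submodule R (Matrix n n R) where
  carrier := {M | M.IsSymm}
  add_mem' := IsSymm.add
  zero_mem' := isSymm_zero
  smul_mem' c _ h := h.smul c

theorem finrank_symmetricSubmodule_le_card (n K : Type*) [LinearOrder n] [Fintype n] [Field K] :
    finrank K (symmetricSubmodule n K) ≤ Fintype.card {p : n × n // p.1 ≤ p.2} := by
  let upper : symmetricSubmodule n K →ₗ[K] {p : n × n // p.1 ≤ p.2} → K :=
    { toFun M p := (M : Matrix n n K) p.1.1 p.1.2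
      map_add' _ _ := rfl
      map_smul' _ _ := rfl }
  refine (LinearMap.finrank_le_finrank_of_injective (f := upper) ?_).trans
    (finrank_fintype_fun_eq_card K).le
  rintro ⟨M, hM⟩ ⟨N, hN⟩ h
  have hle : ∀ r c, r ≤ c → M r c = N r c := fun r c hrc => congr_fun h ⟨(r, c), hrc⟩
  refine Subtype.ext <| Matrix.ext fun r c => ?_
  change M r c = N r c
  rcases le_total r c with hrc | hcr
  · exact hle r c hrc
  · rw [← IsSymm.apply hM, ← IsSymm.apply hN]
    exact hle c r hcr

end Matrix

theorem Fin.card_subtype_le_le_card_subtype_lt_succ (d : ℕ) :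
    Fintype.card {p : Fin d × Fin d // p.1 ≤ p.2} ≤
      Fintype.card {p : Fin (d + 1) × Fin (d + 1) // p.1 < p.2} :=
  Fintype.card_le_of_injective
    (fun p => ⟨(p.1.1.castSucc, p.1.2.succ), Fin.castSucc_lt_succ_iff.2 p.2⟩)
    fun p q h => by simpa [Subtype.ext_iff, Prod.ext_iff] using h

/-- For a nondegenerate `d`-simplex in `ℝᵈ` (i.e. `d+1` affinely
independent vertices), the `n = d(d+1)/2` symmetric rank-one matrices
`e eᵀ` built from its edge vectors `e = xᵢ − xⱼ` (`i < j`) form a basis of the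
real vector space of symmetric `d×d` matrices (formalized as: the family is
linearly independent and spans the submodule of symmetric matrices). -/
theorem stmt_0 (d : ℕ) (x : Fin (d + 1) → (Fin d → ℝ))
    (hx : AffineIndependent ℝ x)
    (e : {p : Fin (d + 1) × Fin (d + 1) // p.1 < p.2} → (Fin d → ℝ))
    (he : ∀ p, e p = x p.1.1 - x p.1.2) :
    LinearIndependent ℝ (fun p => Matrix.vecMulVec (e p) (e p)) ∧
    (∀ M : Matrix (Fin d) (Fin d) ℝ,
      M ∈ Submodule.span ℝ (Set.range (fun p => Matrix.vecMulVec (e p) (e p)))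
        ↔ M.IsSymm) := by
  obtain rfl : e = fun p => x p.1.1 - x p.1.2 := funext he
  have hspan : affineSpan ℝ (Set.range x) = ⊤ :=
    hx.affineSpan_eq_top_iff_card_eq_finrank_add_one.2 (by simp)
  obtain ⟨g, hg⟩ := hx.exists_dotProduct_sub_eq_ite hspan
  have hind := linearIndependent_vecMulVec_sub_self x g hg
  refine ⟨hind, fun M => ?_⟩
  rw [hind.span_eq_of_mem_of_finrank_le (W := symmetricSubmodule (Fin d) ℝ)
    (fun p => transpose_vecMulVec _ _)
    ((finrank_symmetricSubmodule_le_card _ _).trans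
      (Fin.card_subtype_le_le_card_subtype_lt_succ d))]
  rfl
end

section
/- For a triangle with vertices x_i, x_j, x_k, the edge coefficient α_{i,j} satisfying |T| ||u||² = Σ α |⟨e,u⟩|² is given by α_{i,j} = (1/2) cot θ_{i,j}, where θ_{i,j} is the interior angle at vertex x_k opposing edge e_{i,j}. -/
/-! Write `D = planeDet (b - a) (c - a)`. The triangle is the image of the standard triangle
`conv {0, e₀, e₁}`, of area `1 / 2`, under an affine map whose linear part has determinant `D`,
so its area is `|D| / 2`. In the plane `cos ∠(x, y) ‖x‖ ‖y‖ = ⟪x, y⟫` and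
`sin ∠(x, y) ‖x‖ ‖y‖ = |det (x, y)|`, and the determinant of the two edges at any vertex of the
triangle is `D`; hence `½ cot θ = ⟪x, y⟫ / (2 |D|)` for the edges `x, y` enclosing `θ`.
Multiplied by `2 |D|`, the claim becomes the polynomial identity `D² ‖u‖² = Σ ⟪x, y⟫ |⟨e, u⟩|²`,
checked by expanding into the real and imaginary parts of `u`. -/

open MeasureTheory EuclideanGeometry Set Pointwise

def planeDet (x y : EuclideanSpace ℝ (Fin 2)) : ℝ := x 0 * y 1 - x 1 * y 0

lemma real_inner_fin_two (x y : EuclideanSpace ℝ (Fin 2)) :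
    inner ℝ x y = x 0 * y 0 + x 1 * y 1 := by
  simp [PiLp.inner_apply, Fin.sum_univ_two, mul_comm]

lemma planeDet_sub_sub_rotate (a b c : EuclideanSpace ℝ (Fin 2)) :
    planeDet (b - a) (c - a) = planeDet (c - b) (a - b) := by
  simp only [planeDet, PiLp.sub_apply]
  ring

lemma planeDet_sq_mul_sum_norm_sq (a b c : EuclideanSpace ℝ (Fin 2)) (u : Fin 2 → ℂ) :
    planeDet (b - a) (c - a) ^ 2 * ∑ k, ‖u k‖ ^ 2
      = inner ℝ (a - c) (b - c) * ‖∑ k, ((a - b) k : ℂ) * u k‖ ^ 2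
        + inner ℝ (b - a) (c - a) * ‖∑ k, ((b - c) k : ℂ) * u k‖ ^ 2
        + inner ℝ (c - b) (a - b) * ‖∑ k, ((c - a) k : ℂ) * u k‖ ^ 2 := by
  simp only [real_inner_fin_two, planeDet, Fin.sum_univ_two, Complex.sq_norm,
    Complex.normSq_apply, Complex.add_re, Complex.add_im, Complex.mul_re, Complex.mul_im,
    Complex.ofReal_re, Complex.ofReal_im, PiLp.sub_apply]
  ring

lemma sin_angle_mul_norm_mul_norm_eq_abs_planeDet (x y : EuclideanSpace ℝ (Fin 2)) :
    Real.sin (InnerProductGeometry.angle x y) * (‖x‖ * ‖y‖) = |planeDet x y| := by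
  rw [InnerProductGeometry.sin_angle_mul_norm_mul_norm, ← Real.sqrt_sq_eq_abs]
  congr 1
  simp only [real_inner_fin_two, planeDet]
  ring

-- For parallel `x` and `y` both sides are `0`, since `x / 0 = 0`.
lemma InnerProductGeometry.cos_div_sin_angle (x y : EuclideanSpace ℝ (Fin 2)) :
    Real.cos (InnerProductGeometry.angle x y) / Real.sin (InnerProductGeometry.angle x y)
      = inner ℝ x y / |planeDet x y| := by
  rw [InnerProductGeometry.cos_angle, ← sin_angle_mul_norm_mul_norm_eq_abs_planeDet, div_div,
    mul_comm]

lemma EuclideanGeometry.cos_div_sin_angle (p q r : EuclideanSpace ℝ (Fin 2)) :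
    Real.cos (∠ p q r) / Real.sin (∠ p q r)
      = inner ℝ (p - q) (r - q) / |planeDet (p - q) (r - q)| :=
  InnerProductGeometry.cos_div_sin_angle (p - q) (r - q)

lemma volume_region_between_cc_eq_lintegral {α : Type*} [MeasurableSpace α] {μ : Measure α}
    {f g : α → ℝ} {s : Set α} (hf : Measurable f) (hg : Measurable g) (hs : MeasurableSet s) :
    μ.prod volume {p : α × ℝ | p.1 ∈ s ∧ p.2 ∈ Icc (f p.1) (g p.1)}
      = ∫⁻ x in s, ENNReal.ofReal (g x - f x) ∂μ := by
  rw [Measure.prod_apply (measurableSet_region_between_cc hf hg hs), ← lintegral_indicator hs]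
  congr 1
  funext x
  by_cases hx : x ∈ s
  · rw [indicator_of_mem hx, ← Real.volume_Icc]
    congr 1
    ext y
    simp [hx]
  · simp [hx]

lemma volume_standardTriangle :
    volume {p : ℝ × ℝ | p.1 ∈ Icc 0 1 ∧ p.2 ∈ Icc 0 (1 - p.1)} = ENNReal.ofReal (1 / 2) := by
  rw [Measure.volume_eq_prod, volume_region_between_cc_eq_lintegral (f := fun _ => 0)
    (g := fun x => 1 - x) measurable_const (by fun_prop) measurableSet_Icc,
    ← ofReal_integral_eq_lintegral_ofReal, integral_Icc_eq_integral_Ioc,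
    ← intervalIntegral.integral_of_le zero_le_one]
  · simp only [sub_zero]
    rw [intervalIntegral.integral_sub intervalIntegrable_const
      intervalIntegral.intervalIntegrable_id]
    norm_num
  · exact Continuous.integrableOn_Icc (by fun_prop)
  · exact (ae_restrict_iff' measurableSet_Icc).2 (ae_of_all _ fun x hx => by simp [hx.2])

lemma convexHull_zero_single_single :
    convexHull ℝ {0, EuclideanSpace.single 0 1, EuclideanSpace.single 1 1}
      = {x : EuclideanSpace ℝ (Fin 2) | x 0 ∈ Icc 0 1 ∧ x 1 ∈ Icc 0 (1 - x 0)} := by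
  apply (convexHull_min _ _).antisymm
  · rintro x ⟨⟨hx0, -⟩, hx1, hx⟩
    have hw : ∀ i ∈ Finset.univ, 0 ≤ ![1 - x 0 - x 1, x 0, x 1] i := by
      intro i _
      fin_cases i <;> simp only [Fin.zero_eta, Fin.mk_one, Fin.reduceFinMk, Matrix.cons_val] <;>
        linarith
    have hmem := (convex_convexHull ℝ _).sum_mem hw
      (by simp only [Fin.sum_univ_three, Matrix.cons_val]; ring)
      (z := ![(0 : EuclideanSpace ℝ (Fin 2)), EuclideanSpace.single 0 1,
        EuclideanSpace.single 1 1])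
      (fun i _ => subset_convexHull ℝ
        {0, EuclideanSpace.single 0 1, EuclideanSpace.single 1 1} (by fin_cases i <;> simp))
    convert hmem
    ext k
    fin_cases k <;> simp [Fin.sum_univ_three]
  · rintro x (rfl | rfl | rfl) <;> norm_num
  · rintro x ⟨⟨hx0, -⟩, hx1, hx⟩ y ⟨⟨hy0, -⟩, hy1, hy⟩ p q hp hq hpq
    simp only [mem_ofPred_eq, mem_Icc, PiLp.add_apply, PiLp.smul_apply, smul_eq_mul]
    refine ⟨⟨by positivity, ?_⟩, by positivity, ?_⟩ <;> nlinarith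

lemma volume_convexHull_zero_single_single :
    volume (convexHull ℝ {0, EuclideanSpace.single 0 1, EuclideanSpace.single 1 1}
      : Set (EuclideanSpace ℝ (Fin 2))) = ENNReal.ofReal (1 / 2) := by
  have hmp := (volume_preserving_finTwoArrow ℝ).comp
    (EuclideanSpace.volume_preserving_symm_measurableEquiv_toLp (Fin 2))
  rw [convexHull_zero_single_single, ← volume_standardTriangle]
  exact hmp.measure_preimage
    (measurableSet_region_between_cc measurable_const (by fun_prop)
      measurableSet_Icc).nullMeasurableSet

lemma volume_convexHull_triangle (a b c : EuclideanSpace ℝ (Fin 2)) :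
    volume (convexHull ℝ {a, b, c}) = ENNReal.ofReal (|planeDet (b - a) (c - a)| / 2) := by
  set B := (EuclideanSpace.basisFun (Fin 2) ℝ).toBasis
  set L := Matrix.toLin B B !![(b - a) 0, (c - a) 0; (b - a) 1, (c - a) 1]
  have hB : ∀ i, B i = EuclideanSpace.single i 1 := by simp [B]
  have hL : ∀ j, L (EuclideanSpace.single j 1) = ![b - a, c - a] j := by
    intro j
    rw [← hB, Matrix.toLin_self]
    ext k
    fin_cases j <;> fin_cases k <;> simp [hB, Fin.sum_univ_two]
  have hdet : LinearMap.det L = planeDet (b - a) (c - a) := by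
    rw [LinearMap.det_toLin, Matrix.det_fin_two_of, planeDet]
    ring
  have hhull : convexHull ℝ {a, b, c}
      = a +ᵥ L '' convexHull ℝ {0, EuclideanSpace.single 0 1, EuclideanSpace.single 1 1} := by
    rw [LinearMap.image_convexHull, ← convexHull_vadd]
    congr 1
    simp [image_insert_eq, hL, Set.vadd_set_insert, Set.vadd_set_singleton]
  rw [hhull, measure_vadd, Measure.addHaar_image_linearMap, hdet,
    volume_convexHull_zero_single_single, ← ENNReal.ofReal_mul (abs_nonneg _)]
  ring_nf

theorem stmt_2_general (a b c : EuclideanSpace ℝ (Fin 2)) :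
    ∀ u : Fin 2 → ℂ,
      (volume (convexHull ℝ {a, b, c})).toReal * ∑ k, ‖u k‖ ^ 2
        = (1 / 2) * (Real.cos (∠ a c b) / Real.sin (∠ a c b))
              * ‖∑ k, ((a - b) k : ℂ) * u k‖ ^ 2
          + (1 / 2) * (Real.cos (∠ b a c) / Real.sin (∠ b a c))
              * ‖∑ k, ((b - c) k : ℂ) * u k‖ ^ 2
          + (1 / 2) * (Real.cos (∠ c b a) / Real.sin (∠ c b a))
              * ‖∑ k, ((c - a) k : ℂ) * u k‖ ^ 2 := by
  intro u
  rw [volume_convexHull_triangle, ENNReal.toReal_ofReal (by positivity), cos_div_sin_angle,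
    cos_div_sin_angle, cos_div_sin_angle, planeDet_sub_sub_rotate c a b,
    ← planeDet_sub_sub_rotate a b c]
  set D := planeDet (b - a) (c - a)
  calc |D| / 2 * ∑ k, ‖u k‖ ^ 2 = |D| * |D| / |D| / 2 * ∑ k, ‖u k‖ ^ 2 := by
        rw [mul_self_div_self]
    _ = (D ^ 2 * ∑ k, ‖u k‖ ^ 2) / (2 * |D|) := by rw [← sq_abs]; ring
    _ = _ := by rw [planeDet_sq_mul_sum_norm_sq]; ring

/-- For a nondegenerate triangle `T` in `ℝ²` with vertices
`a, b, c`, the edge coefficients in the identity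
`|T|·‖u‖² = Σ_{edges} α |⟨e,u⟩|²` (for all `u ∈ ℂ²`) are
`α_{edge} = (1/2)·cot θ`, where `θ` is the interior angle at the vertex
opposite the edge. -/
theorem stmt_2 (a b c : EuclideanSpace ℝ (Fin 2))
    (hT : AffineIndependent ℝ ![a, b, c]) :
    ∀ u : Fin 2 → ℂ,
      (volume (convexHull ℝ {a, b, c})).toReal * ∑ k, ‖u k‖ ^ 2
        = (1 / 2) * (Real.cos (∠ a c b) / Real.sin (∠ a c b))
              * ‖∑ k, ((a - b) k : ℂ) * u k‖ ^ 2
          + (1 / 2) * (Real.cos (∠ b a c) / Real.sin (∠ b a c))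
              * ‖∑ k, ((b - c) k : ℂ) * u k‖ ^ 2
          + (1 / 2) * (Real.cos (∠ c b a) / Real.sin (∠ c b a))
              * ‖∑ k, ((c - a) k : ℂ) * u k‖ ^ 2 :=
  stmt_2_general a b c
end

section
/- For edge coefficients α_{j,k} of a nondegenerate d-simplex S (satisfying |S| I = Σ α_{j,k} e_{j,k} e_{j,k}^T), the coefficient vector α is the unique solution of the linear system M α = b, where M_{i,j} = ⟨e_i, e_j⟩² over all pairs of edges and b_i = |S| ||e_i||². Moreover the matrix M is symmetric positive definite. -/
/-!
The rank-one matrices `e eᵀ` of the edges are linearly independent: if `∑ c_q e_q e_qᵀ = 0`, pair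
it with the linear parts `φ_i` of the barycentric coordinates of the simplex, which take the
values `δ_{i a} - δ_{i b}` on the edge `x_a - x_b`; for `a < b` the pairing with `φ_a ⊗ φ_b`
retains exactly `-c_{(a,b)}`. Since `(e_p · e_q)²` is the Frobenius inner product of `e_p e_pᵀ`
and `e_q e_qᵀ`, `M` is a Gram matrix of independent vectors, hence positive definite and
invertible. Finally, pairing `|S| I = ∑ α_q e_q e_qᵀ` with `e_p` on both sides is the `p`-th row
of `M α = b`.
-/

open Matrix MeasureTheory

namespace Matrix

variable {ι n R : Type*}

theorem dotProduct_sum_smul_vecMulVec_mulVec [Fintype ι] [Fintype n] [CommRing R]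
    (c : ι → R) (v : ι → n → R) (u w : n → R) :
    u ⬝ᵥ (∑ i, c i • vecMulVec (v i) (v i)) *ᵥ w = ∑ i, c i * (u ⬝ᵥ v i) * (v i ⬝ᵥ w) := by
  simp only [sum_mulVec, smul_mulVec, vecMulVec_mulVec, dotProduct_sum, dotProduct_smul,
    op_smul_eq_smul, smul_eq_mul]
  exact Finset.sum_congr rfl fun i _ => by ring

theorem mulVec_eq_of_smul_one_eq_sum_smul_vecMulVec [Fintype ι] [Fintype n] [DecidableEq n]
    [CommRing R] (v : ι → n → R) (α : ι → R) (s : R)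
    (h : s • (1 : Matrix n n R) = ∑ i, α i • vecMulVec (v i) (v i)) :
    (of fun i j => (v i ⬝ᵥ v j) ^ 2) *ᵥ α = fun i => s * (v i ⬝ᵥ v i) := by
  funext i
  have hi := dotProduct_sum_smul_vecMulVec_mulVec α v (v i) (v i)
  rw [← h, smul_mulVec, one_mulVec, dotProduct_smul, smul_eq_mul] at hi
  rw [hi, mulVec, dotProduct]
  exact Finset.sum_congr rfl fun j _ => by rw [of_apply, dotProduct_comm (v j)]; ring

/-- Realizes the Frobenius inner product on `Matrix n n ℝ` as the Euclidean one. -/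
noncomputable def flattenEuclidean (n : Type*) : Matrix n n ℝ ≃ₗ[ℝ] EuclideanSpace ℝ (n × n) :=
  (LinearEquiv.curry ℝ ℝ n n).symm.trans (WithLp.linearEquiv 2 ℝ (n × n → ℝ)).symm

theorem gram_flattenEuclidean_vecMulVec [Fintype n] (v : ι → n → ℝ) :
    gram ℝ (fun i => flattenEuclidean n (vecMulVec (v i) (v i))) =
      of fun i j => (v i ⬝ᵥ v j) ^ 2 := by
  ext i j
  simp only [gram_apply, PiLp.inner_apply, Fintype.sum_prod_type, of_apply, dotProduct, sq,
    Finset.sum_mul_sum, RCLike.inner_apply, conj_trivial]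
  exact Finset.sum_congr rfl fun k _ => Finset.sum_congr rfl fun l _ =>
    show v j k * v j l * (v i k * v i l) = _ by ring

theorem posDef_sq_dotProduct_of_linearIndependent [Finite ι] [Fintype n] {v : ι → n → ℝ}
    (h : LinearIndependent ℝ fun i => vecMulVec (v i) (v i)) :
    (of fun i j => (v i ⬝ᵥ v j) ^ 2).PosDef :=
  gram_flattenEuclidean_vecMulVec v ▸
    posDef_gram_of_linearIndependent (h.map' _ (flattenEuclidean n).ker)

end Matrix

theorem ite_sub_ite_mul_ite_sub_ite {ι R : Type*} [LinearOrder ι] [Ring R]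
    (p q : {p : ι × ι // p.1 < p.2}) :
    ((if p.1.1 = q.1.1 then (1 : R) else 0) - if p.1.1 = q.1.2 then 1 else 0) *
      ((if p.1.2 = q.1.1 then 1 else 0) - if p.1.2 = q.1.2 then 1 else 0) =
      if q = p then -1 else 0 := by
  obtain ⟨⟨a, b⟩, hab⟩ := p
  obtain ⟨⟨c, d⟩, hcd⟩ := q
  simp only [Subtype.mk.injEq, Prod.mk.injEq]
  split_ifs <;> grind

theorem AffineBasis.linearIndependent_vecMulVec_sub {ι n 𝕜 : Type*} [LinearOrder ι] [Fintype ι]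
    [Fintype n] [DecidableEq n] [Field 𝕜] (b : AffineBasis ι 𝕜 (n → 𝕜)) :
    LinearIndependent 𝕜 fun p : {p : ι × ι // p.1 < p.2} =>
      vecMulVec (b p.1.1 - b p.1.2) (b p.1.1 - b p.1.2) := by
  rw [Fintype.linearIndependent_iff]
  intro c hc p
  let φ : ι → n → 𝕜 := fun i => (dotProductEquiv 𝕜 n).symm (b.coord i).linear
  have hφ : ∀ i j k, φ i ⬝ᵥ (b j - b k) = (if i = j then 1 else 0) - if i = k then 1 else 0 := by
    intro i j k
    rw [← dotProductEquiv_apply_apply, LinearEquiv.apply_symm_apply, ← vsub_eq_sub,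
      AffineMap.linearMap_vsub, b.coord_apply, b.coord_apply, vsub_eq_sub]
  have hp := dotProduct_sum_smul_vecMulVec_mulVec c (fun q => b q.1.1 - b q.1.2) (φ p.1.1) (φ p.1.2)
  simp only [hc, zero_mulVec, dotProduct_zero, dotProduct_comm _ (φ p.1.2), hφ, mul_assoc,
    ite_sub_ite_mul_ite_sub_ite, mul_ite, mul_neg, mul_one, mul_zero,
    Finset.sum_ite_eq', Finset.mem_univ, if_true] at hp
  exact neg_eq_zero.mp hp.symm

/-- For a nondegenerate `d`-simplex `S` with edge vectors
`e_p`, the matrix `M` with entries `M_{pq} = ⟨e_p, e_q⟩²` is symmetric positive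
definite, the system `Mα = b` with `b_p = |S|·‖e_p‖²` has a unique solution,
and every coefficient vector `α` satisfying `|S|·I = Σ_p α_p e_p e_pᵀ`
solves `Mα = b`. -/
theorem stmt_16 (d : ℕ) (x : Fin (d + 1) → (Fin d → ℝ))
    (hx : AffineIndependent ℝ x)
    (e : {p : Fin (d + 1) × Fin (d + 1) // p.1 < p.2} → (Fin d → ℝ))
    (he : ∀ p, e p = x p.1.1 - x p.1.2)
    (M : Matrix {p : Fin (d + 1) × Fin (d + 1) // p.1 < p.2}
                {p : Fin (d + 1) × Fin (d + 1) // p.1 < p.2} ℝ)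
    (hM : ∀ p q, M p q = (∑ k, e p k * e q k) ^ 2)
    (b : {p : Fin (d + 1) × Fin (d + 1) // p.1 < p.2} → ℝ)
    (hb : ∀ p, b p
      = (volume (convexHull ℝ (Set.range x))).toReal * ∑ k, e p k ^ 2) :
    M.PosDef ∧
    (∃! α : {p : Fin (d + 1) × Fin (d + 1) // p.1 < p.2} → ℝ, M.mulVec α = b) ∧
    (∀ α : {p : Fin (d + 1) × Fin (d + 1) // p.1 < p.2} → ℝ,
      (volume (convexHull ℝ (Set.range x))).toReal • (1 : Matrix (Fin d) (Fin d) ℝ)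
          = ∑ p, α p • Matrix.vecMulVec (e p) (e p) →
       M.mulVec α = b) := by
  obtain rfl : M = of fun p q => (e p ⬝ᵥ e q) ^ 2 := by ext p q; exact hM p q
  obtain rfl : b = fun p => (volume (convexHull ℝ (Set.range x))).toReal * (e p ⬝ᵥ e p) := by
    ext p; simp only [hb, dotProduct, sq]
  have hspan : affineSpan ℝ (Set.range x) = ⊤ :=
    hx.affineSpan_eq_top_iff_card_eq_finrank_add_one.mpr (by simp)
  have hli : LinearIndependent ℝ fun p => vecMulVec (e p) (e p) := by
    simp only [he]
    exact (⟨x, hx, hspan⟩ : AffineBasis _ ℝ _).linearIndependent_vecMulVec_sub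
  have hPD := posDef_sq_dotProduct_of_linearIndependent hli
  refine ⟨hPD, ?_, fun α hα => mulVec_eq_of_smul_one_eq_sum_smul_vecMulVec e α _ hα⟩
  exact Function.Bijective.existsUnique
    ⟨mulVec_injective_iff_isUnit.mpr hPD.isUnit, mulVec_surjective_iff_isUnit.mpr hPD.isUnit⟩ _
end
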